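/- arXiv:1703.04121 — 2 statements merged into one kernel-verified Lean document; each statement's English description precedes it below -/
import Mathlib

section
/- Let T be a 3-form on V, identified with its image in Cl(V). Then ∑_{j=1}^{n} e_j · T · (e_j ⌟ T) = −3 T·T − 2 ∑_{j=1}^{n} (e_j ⌟ T) · (e_j ⌟ T) in Cl(V). -/
/-! For odd `x ∈ Cl(V)` and a vector `X`, the graded commutator identity
`X·x - involute(x)·X = polar(X,·) ⌟ x` becomes `X·x = -x·X - 2 (X ⌟ x)`. Applied to `x = T`
under the sum, it turns `∑ⱼ eⱼ·T·(eⱼ ⌟ T)` into `-T·∑ⱼ eⱼ·(eⱼ ⌟ T) - 2 ∑ⱼ (eⱼ ⌟ T)·(eⱼ ⌟ T)`,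
and `∑ⱼ eⱼ·(eⱼ ⌟ T) = 3 T` is the Euler identity for 3-forms. The Euler identity is proved in the
exterior algebra and transported to `Cl(V)`, where the correction term `eⱼ ⌟ eⱼ ⌟ T` vanishes. -/

noncomputable section

open scoped RealInnerProductSpace

variable {V : Type*} [NormedAddCommGroup V] [InnerProductSpace ℝ V]

/-- The quadratic form `Q(v) = -⟨v,v⟩` on a real inner product space, so that
`X·Y + Y·X = -2⟨X,Y⟩` holds in the Clifford algebra. -/
def negInnerQuadraticForm (V : Type*) [NormedAddCommGroup V] [InnerProductSpace ℝ V] :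
    QuadraticForm ℝ V :=
  - LinearMap.BilinMap.toQuadraticMap (innerₗ V : LinearMap.BilinForm ℝ V)

/-- The interior product (contraction) `X ⌟ ω` of an exterior form `ω` by a vector `X`,
using the inner product to identify `X` with a dual vector. -/
def interiorProd (X : V) (ω : ExteriorAlgebra ℝ V) : ExteriorAlgebra ℝ V :=
  CliffordAlgebra.contractLeft (Q := (0 : QuadraticForm ℝ V))
    (innerₗ V X) ω

/-- The canonical linear isomorphism from the exterior algebra to the Clifford algebra
`Cl(V)` of `Q(v) = -⟨v,v⟩`, sending `e_{i₁} ∧ ⋯ ∧ e_{iₚ}` (for orthonormal vectors) to the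
Clifford product `e_{i₁} ⋯ e_{iₚ}`. -/
def exteriorToClifford (ω : ExteriorAlgebra ℝ V) :
    CliffordAlgebra (negInnerQuadraticForm V) :=
  letI : Invertible (2 : ℝ) := invertibleOfNonzero two_ne_zero
  (CliffordAlgebra.equivExterior (negInnerQuadraticForm V)).symm ω

/-- The submodule of `p`-forms, i.e. the `p`-th exterior power inside the exterior algebra. -/
def pForms (V : Type*) [NormedAddCommGroup V] [InnerProductSpace ℝ V] (p : ℕ) :
    Submodule ℝ (ExteriorAlgebra ℝ V) :=
  LinearMap.range (ExteriorAlgebra.ι ℝ : V →ₗ[ℝ] ExteriorAlgebra ℝ V) ^ p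

/-- Evaluation `T(X,Y,Z)` of a 3-form `T` (given as an element of the exterior algebra):
the scalar part of the triple contraction `Z ⌟ (Y ⌟ (X ⌟ T))`. -/
def eval3 (T : ExteriorAlgebra ℝ V) (X Y Z : V) : ℝ :=
  ExteriorAlgebra.algebraMapInv (interiorProd Z (interiorProd Y (interiorProd X T)))

local infixl:70 " ⌋ " => CliffordAlgebra.contractLeft

namespace CliffordAlgebra

variable {R M : Type*} [CommRing R] [AddCommGroup M] [Module R M] {Q : QuadraticForm R M}

theorem range_ι_pow_le_evenOdd (p : ℕ) : LinearMap.range (ι Q) ^ p ≤ evenOdd Q p :=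
  le_iSup (fun j : { n : ℕ // (n : ZMod 2) = p } => LinearMap.range (ι Q) ^ (j : ℕ)) ⟨p, rfl⟩

theorem involute_contractLeft (d : Module.Dual R M) (x : CliffordAlgebra Q) :
    involute (d ⌋ x) = -(d ⌋ involute x) := by
  induction x using left_induction with
  | algebraMap r => simp [contractLeft_algebraMap]
  | add x y hx hy => simp only [map_add, hx, hy, neg_add]
  | ι_mul y m hy =>
    simp only [contractLeft_ι_mul, map_sub, map_smul, map_mul, involute_ι, hy, neg_mul,
      mul_neg, map_neg, neg_neg]

theorem involute_changeForm {Q' : QuadraticForm R M} {B : LinearMap.BilinForm R M}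
    (h : B.toQuadraticMap = Q' - Q) (x : CliffordAlgebra Q) :
    involute (changeForm h x) = changeForm h (involute x) := by
  induction x using left_induction with
  | algebraMap r => simp
  | add x y hx hy => simp only [map_add, hx, hy]
  | ι_mul y m hy =>
    simp only [changeForm_ι_mul, map_sub, map_mul, involute_ι, hy, involute_contractLeft,
      neg_mul, map_neg, sub_neg_eq_add]
    abel

theorem ι_mul_sub_involute_mul_ι (m : M) (x : CliffordAlgebra Q) :
    ι Q m * x - involute x * ι Q m = QuadraticMap.polarBilin Q m ⌋ x := by
  induction x using left_induction with
  | algebraMap r => simp [Algebra.commutes, contractLeft_algebraMap]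
  | add x y hx hy => simp only [mul_add, map_add, add_mul, ← hx, ← hy]; abel
  | ι_mul y a hy =>
    rw [contractLeft_ι_mul, ← hy, QuadraticMap.polarBilin_apply_apply, Algebra.smul_def,
      ← ι_mul_ι_add_swap, map_mul, involute_ι]
    noncomm_ring

end CliffordAlgebra

namespace ExteriorAlgebra

variable {R M : Type*} [CommRing R] [AddCommGroup M] [Module R M]

theorem sum_ι_mul_contractLeft_coord {κ : Type*} [Fintype κ] (b : Module.Basis κ R M) {p : ℕ}
    {ω : ExteriorAlgebra R M} (hω : ω ∈ ⋀[R]^p M) :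
    ∑ i, ι R (b i) * (b.coord i ⌋ ω) = p • ω := by
  induction hω using Submodule.pow_induction_on_left' with
  | algebraMap r => simp [CliffordAlgebra.contractLeft_algebraMap]
  | add x y i _ _ hx hy => simp only [map_add, mul_add, Finset.sum_add_distrib, hx, hy, smul_add]
  | mem_mul m hm i x _ hx =>
    obtain ⟨a, rfl⟩ := hm
    have hswap (v : M) : ι R v * ι R a = -(ι R a * ι R v) :=
      eq_neg_of_add_eq_zero_left (ι_add_mul_swap v a)
    calc ∑ j, ι R (b j) * (b.coord j ⌋ (ι R a * x))
        = ι R (∑ j, b.coord j a • b j) * x + ι R a * ∑ j, ι R (b j) * (b.coord j ⌋ x) := by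
          simp only [CliffordAlgebra.contractLeft_ι_mul, mul_sub, mul_smul_comm, ← mul_assoc,
            hswap, neg_mul, sub_neg_eq_add, Finset.sum_add_distrib, map_sum, map_smul,
            Finset.sum_mul, Finset.mul_sum, smul_mul_assoc]
      _ = (i + 1) • (ι R a * x) := by
          simp only [Module.Basis.coord_apply, b.sum_repr, hx, mul_smul_comm, add_smul, one_smul,
            add_comm]

end ExteriorAlgebra

section

open CliffordAlgebra

theorem polarBilin_negInnerQuadraticForm (X : V) :
    QuadraticMap.polarBilin (negInnerQuadraticForm V) X = (-2 : ℝ) • innerₗ V X := by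
  ext Y
  simp only [QuadraticMap.polarBilin_apply_apply, QuadraticMap.polar, negInnerQuadraticForm,
    neg_apply, LinearMap.BilinMap.toQuadraticMap_apply, innerₗ_apply_apply,
    real_inner_add_add_self, LinearMap.smul_apply, smul_eq_mul]
  ring

theorem toQuadraticMap_neg_innerₗ :
    LinearMap.BilinMap.toQuadraticMap (-innerₗ V : LinearMap.BilinForm ℝ V) =
      negInnerQuadraticForm V - 0 := by
  rw [sub_zero, negInnerQuadraticForm, LinearMap.BilinMap.toQuadraticMap_neg]

theorem exteriorToClifford_eq_changeForm (ω : ExteriorAlgebra ℝ V) :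
    exteriorToClifford ω = changeForm (toQuadraticMap_neg_innerₗ (V := V)) ω := by
  change changeForm (changeForm.neg_proof changeForm.associated_neg_proof) ω = _
  congr 2
  rw [negInnerQuadraticForm, neg_neg]
  exact congrArg Neg.neg (QuadraticMap.associated_left_inverse ℝ fun x y => real_inner_comm y x)

theorem exteriorToClifford_ι_mul (m : V) (ω : ExteriorAlgebra ℝ V) :
    exteriorToClifford (ExteriorAlgebra.ι ℝ m * ω) =
      ι _ m * exteriorToClifford ω + innerₗ V m ⌋ exteriorToClifford ω := by
  simp only [exteriorToClifford_eq_changeForm, changeForm_ι_mul, LinearMap.neg_apply, map_neg,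
    sub_neg_eq_add]

theorem exteriorToClifford_interiorProd (X : V) (ω : ExteriorAlgebra ℝ V) :
    exteriorToClifford (interiorProd X ω) = innerₗ V X ⌋ exteriorToClifford ω := by
  simp only [exteriorToClifford_eq_changeForm, interiorProd, changeForm_contractLeft]

theorem involute_exteriorToClifford (ω : ExteriorAlgebra ℝ V) :
    involute (exteriorToClifford ω) = exteriorToClifford (involute ω) := by
  simp only [exteriorToClifford_eq_changeForm, involute_changeForm]

theorem sum_ι_mul_contractLeft_exteriorToClifford {κ : Type*} [Fintype κ]
    (e : OrthonormalBasis κ ℝ V) {p : ℕ} {ω : ExteriorAlgebra ℝ V} (hω : ω ∈ ⋀[ℝ]^p V) :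
    ∑ i, ι _ (e i) * (innerₗ V (e i) ⌋ exteriorToClifford ω) = p • exteriorToClifford ω := by
  have hcoord (i : κ) : e.toBasis.coord i = innerₗ V (e i) := by
    ext x
    simp [Module.Basis.coord_apply, OrthonormalBasis.repr_apply_apply]
  have hterm (i : κ) : ι _ (e i) * (innerₗ V (e i) ⌋ exteriorToClifford ω) =
      exteriorToClifford (ExteriorAlgebra.ι ℝ (e i) * (innerₗ V (e i) ⌋ ω)) := by
    rw [exteriorToClifford_ι_mul, ← interiorProd, exteriorToClifford_interiorProd,
      contractLeft_contractLeft, add_zero]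
  have hEuler := ExteriorAlgebra.sum_ι_mul_contractLeft_coord e.toBasis hω
  simp only [hcoord, OrthonormalBasis.coe_toBasis] at hEuler
  rw [Finset.sum_congr rfl fun i _ => hterm i]
  simp only [exteriorToClifford_eq_changeForm]
  rw [← map_sum, hEuler, map_nsmul]

theorem ι_mul_exteriorToClifford_of_mem_odd (X : V) {ω : ExteriorAlgebra ℝ V}
    (hω : ω ∈ evenOdd 0 1) :
    ι _ X * exteriorToClifford ω =
      -(exteriorToClifford ω * ι _ X) + (-2 : ℝ) • (innerₗ V X ⌋ exteriorToClifford ω) := by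
  have h := ι_mul_sub_involute_mul_ι X (exteriorToClifford ω)
  rw [involute_exteriorToClifford, involute_eq_of_mem_odd hω,
    exteriorToClifford_eq_changeForm (-ω), map_neg, ← exteriorToClifford_eq_changeForm,
    polarBilin_negInnerQuadraticForm, map_smul, LinearMap.smul_apply, sub_eq_iff_eq_add,
    neg_mul] at h
  rw [h, add_comm]

end

/-- For a 3-form `T`:
`∑ⱼ eⱼ·T·(eⱼ ⌟ T) = -3 T·T - 2 ∑ⱼ (eⱼ ⌟ T)·(eⱼ ⌟ T)` in `Cl(V)`. -/
theorem stmt9 {n : ℕ} (e : OrthonormalBasis (Fin n) ℝ V)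
    (T : ExteriorAlgebra ℝ V) (hT : T ∈ pForms V 3) :
    ∑ j : Fin n, CliffordAlgebra.ι (negInnerQuadraticForm V) (e j) *
        exteriorToClifford T * exteriorToClifford (interiorProd (e j) T) =
      (-3 : ℝ) • (exteriorToClifford T * exteriorToClifford T) -
        (2 : ℝ) • ∑ j : Fin n, exteriorToClifford (interiorProd (e j) T) *
          exteriorToClifford (interiorProd (e j) T) := by
  have hodd : T ∈ CliffordAlgebra.evenOdd 0 1 := CliffordAlgebra.range_ι_pow_le_evenOdd 3 hT
  simp only [exteriorToClifford_interiorProd]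
  set x := exteriorToClifford T
  calc ∑ j, CliffordAlgebra.ι _ (e j) * x * (innerₗ V (e j) ⌋ x)
      = ∑ j, (-(x * (CliffordAlgebra.ι _ (e j) * (innerₗ V (e j) ⌋ x))) +
          (-2 : ℝ) • ((innerₗ V (e j) ⌋ x) * (innerₗ V (e j) ⌋ x))) := by
        refine Finset.sum_congr rfl fun j _ => ?_
        rw [ι_mul_exteriorToClifford_of_mem_odd _ hodd, add_mul, neg_mul, mul_assoc,
          smul_mul_assoc]
    _ = -((3 : ℕ) • (x * x)) + (-2 : ℝ) • ∑ j, (innerₗ V (e j) ⌋ x) * (innerₗ V (e j) ⌋ x) := by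
        rw [Finset.sum_add_distrib, Finset.sum_neg_distrib, ← Finset.mul_sum, ← Finset.smul_sum,
          sum_ι_mul_contractLeft_exteriorToClifford e hT, mul_smul_comm]
    _ = _ := by module
end
end

section
/- Let T be a 3-form on V and let M be a module over Cl(V). Then for every family ψ_1, …, ψ_n of elements of M: ∑_{i=1}^{n} ∑_{j=1}^{n} ∑_{k=1}^{n} T(e_i, e_j, e_k) · e_i · e_j · ψ_k = 2 ∑_{k=1}^{n} (e_k ⌟ T) · ψ_k, where forms and vectors act on M through their images in Cl(V). -/
noncomputable section

open scoped RealInnerProductSpace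

variable {V : Type*} [NormedAddCommGroup V] [InnerProductSpace ℝ V]

/-!
Contracting with `e_k` first turns `T` into the 2-form `β = e_k ⌟ T`, and `T(X, Y, e_k) = β(X, Y)`
since interior products anticommute. In `Cl(V)` every 2-form satisfies
`∑ᵢ ∑ⱼ β(eᵢ, eⱼ) eᵢ·eⱼ = 2β`: for `β = a ∧ b` the left side is `a·b − b·a`, while `a ∧ b`
corresponds to `a·b + ⟨a, b⟩`, and the two agree by `a·b + b·a = −2⟨a, b⟩`.
-/

local notation "ε" => ExteriorAlgebra.ι ℝ (M := V)
local notation "γ" => CliffordAlgebra.ι (negInnerQuadraticForm V)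

lemma interiorProd_ι (X a : V) : interiorProd X (ε a) = algebraMap ℝ _ ⟪X, a⟫ :=
  CliffordAlgebra.contractLeft_ι _ _ _

lemma interiorProd_ι_mul (X a : V) (ω : ExteriorAlgebra ℝ V) :
    interiorProd X (ε a * ω) = ⟪X, a⟫ • ω - ε a * interiorProd X ω :=
  CliffordAlgebra.contractLeft_ι_mul _ _ _

lemma interiorProd_comm (X Y : V) (ω : ExteriorAlgebra ℝ V) :
    interiorProd X (interiorProd Y ω) = -interiorProd Y (interiorProd X ω) :=
  CliffordAlgebra.contractLeft_comm _ _ _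

lemma interiorProd_mem_pForms (X : V) {p : ℕ} {ω : ExteriorAlgebra ℝ V}
    (hω : ω ∈ pForms V (p + 1)) : interiorProd X ω ∈ pForms V p := by
  induction p generalizing ω with
  | zero =>
    rw [zero_add, pForms, pow_one] at hω
    obtain ⟨a, rfl⟩ := hω
    rw [interiorProd_ι, pForms, pow_zero]
    exact Submodule.algebraMap_mem _
  | succ p ih =>
    rw [pForms, pow_succ'] at hω
    refine Submodule.mul_induction_on hω ?_ fun _ _ h₁ h₂ => ?_
    · rintro _ ⟨a, rfl⟩ η hη
      rw [interiorProd_ι_mul]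
      refine sub_mem (Submodule.smul_mem _ _ hη) ?_
      rw [pForms, pow_succ']
      exact Submodule.mul_mem_mul (LinearMap.mem_range_self _ a) (ih hη)
    · simpa only [interiorProd, map_add] using add_mem h₁ h₂

lemma exteriorToClifford_add (a b : ExteriorAlgebra ℝ V) :
    exteriorToClifford (a + b) = exteriorToClifford a + exteriorToClifford b := by
  simp only [exteriorToClifford, map_add]

lemma polar_negInnerQuadraticForm (a b : V) :
    QuadraticMap.polar (negInnerQuadraticForm V) a b = -(2 * ⟪a, b⟫) := by
  simp only [QuadraticMap.polar, negInnerQuadraticForm, neg_apply,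
    LinearMap.BilinMap.toQuadraticMap_apply, innerₗ_apply_apply, real_inner_add_add_self]
  ring

lemma exteriorToClifford_ι_mul_ι (a b : V) :
    exteriorToClifford (ε a * ε b) = γ a * γ b + algebraMap ℝ _ ⟪a, b⟫ := by
  let : Invertible (2 : ℝ) := invertibleOfNonzero two_ne_zero
  have hB : (-QuadraticMap.associated (R := ℝ) (-negInnerQuadraticForm V)) a b = -⟪a, b⟫ := by
    rw [negInnerQuadraticForm, neg_neg, QuadraticMap.associated_left_inverse _
      (fun x y => real_inner_comm y x)]
    rfl
  change CliffordAlgebra.changeForm (CliffordAlgebra.changeForm.neg_proof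
    CliffordAlgebra.changeForm.associated_neg_proof) _ = _
  rw [CliffordAlgebra.changeForm_ι_mul_ι, hB, map_neg, sub_neg_eq_add]

def eval2 (β : ExteriorAlgebra ℝ V) (X Y : V) : ℝ :=
  ExteriorAlgebra.algebraMapInv (interiorProd Y (interiorProd X β))

lemma eval2_add (β β' : ExteriorAlgebra ℝ V) (X Y : V) :
    eval2 (β + β') X Y = eval2 β X Y + eval2 β' X Y := by
  simp only [eval2, interiorProd, map_add]

lemma eval2_ι_mul_ι (a b X Y : V) :
    eval2 (ε a * ε b) X Y = ⟪X, a⟫ * ⟪Y, b⟫ - ⟪X, b⟫ * ⟪Y, a⟫ := by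
  rw [eval2, interiorProd_ι_mul, interiorProd_ι, ← Algebra.commutes, ← Algebra.smul_def]
  simp only [interiorProd, map_sub, map_smul, CliffordAlgebra.contractLeft_ι, innerₗ_apply_apply,
    ExteriorAlgebra.algebraMap_leftInverse V _, smul_eq_mul]

lemma eval3_eq_eval2_interiorProd (T : ExteriorAlgebra ℝ V) (X Y Z : V) :
    eval3 T X Y Z = eval2 (interiorProd Z T) X Y := by
  rw [eval3, eval2, interiorProd_comm Z Y, interiorProd_comm Z X]
  simp only [interiorProd, map_neg, neg_neg]

section OrthonormalBasis

variable {ι : Type*} [Fintype ι] (e : OrthonormalBasis ι ℝ V)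

lemma sum_inner_smul_ι (a : V) : ∑ i, ⟪e i, a⟫ • γ (e i) = γ a := by
  simp_rw [← map_smul, ← map_sum, e.sum_repr']

lemma sum_inner_mul_inner_smul_ι_mul_ι (a b : V) :
    ∑ i, ∑ j, (⟪e i, a⟫ * ⟪e j, b⟫) • (γ (e i) * γ (e j)) = γ a * γ b := by
  simp_rw [← sum_inner_smul_ι e a, ← sum_inner_smul_ι e b, Finset.sum_mul_sum, smul_mul_smul_comm]

lemma sum_eval2_smul_ι_mul_ι {β : ExteriorAlgebra ℝ V} (hβ : β ∈ pForms V 2) :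
    ∑ i, ∑ j, eval2 β (e i) (e j) • (γ (e i) * γ (e j)) = (2 : ℝ) • exteriorToClifford β := by
  rw [pForms, pow_two] at hβ
  refine Submodule.mul_induction_on hβ ?_ fun β β' hβ hβ' => ?_
  · rintro _ ⟨a, rfl⟩ _ ⟨b, rfl⟩
    simp_rw [eval2_ι_mul_ι, sub_smul, Finset.sum_sub_distrib, sum_inner_mul_inner_smul_ι_mul_ι]
    rw [exteriorToClifford_ι_mul_ι, CliffordAlgebra.ι_mul_ι_comm b a,
      polar_negInnerQuadraticForm, real_inner_comm b a, Algebra.algebraMap_eq_smul_one,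
      Algebra.algebraMap_eq_smul_one]
    module
  · simp_rw [eval2_add, add_smul, Finset.sum_add_distrib, hβ, hβ', exteriorToClifford_add,
      smul_add]

lemma sum_eval3_smul_ι_mul_ι {T : ExteriorAlgebra ℝ V} (hT : T ∈ pForms V 3) (Z : V) :
    ∑ i, ∑ j, eval3 T (e i) (e j) Z • (γ (e i) * γ (e j)) =
      (2 : ℝ) • exteriorToClifford (interiorProd Z T) := by
  simp_rw [eval3_eq_eval2_interiorProd]
  exact sum_eval2_smul_ι_mul_ι e (interiorProd_mem_pForms Z hT)

end OrthonormalBasis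

/-- For a 3-form `T`, a module `M` over `Cl(V)` and a family `ψ` in `M`:
`∑ᵢ ∑ⱼ ∑ₖ T(eᵢ,eⱼ,eₖ) • eᵢ·eⱼ·ψₖ = 2 ∑ₖ (eₖ ⌟ T)·ψₖ`. -/
theorem stmt12 {n : ℕ} (e : OrthonormalBasis (Fin n) ℝ V)
    (T : ExteriorAlgebra ℝ V) (hT : T ∈ pForms V 3)
    (M : Type*) [AddCommGroup M] [Module ℝ M]
    [Module (CliffordAlgebra (negInnerQuadraticForm V)) M]
    [IsScalarTower ℝ (CliffordAlgebra (negInnerQuadraticForm V)) M]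
    (ψ : Fin n → M) :
    ∑ i : Fin n, ∑ j : Fin n, ∑ k : Fin n, eval3 T (e i) (e j) (e k) •
        ((CliffordAlgebra.ι (negInnerQuadraticForm V) (e i) *
            CliffordAlgebra.ι (negInnerQuadraticForm V) (e j)) • ψ k) =
      (2 : ℝ) • ∑ k : Fin n, exteriorToClifford (interiorProd (e k) T) • ψ k := by
  have h2ψ (k : Fin n) : (2 : ℝ) • exteriorToClifford (interiorProd (e k) T) • ψ k =
      ∑ i, ∑ j, eval3 T (e i) (e j) (e k) • (γ (e i) * γ (e j)) • ψ k := by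
    rw [← smul_assoc, ← sum_eval3_smul_ι_mul_ι e hT]
    simp only [Finset.sum_smul, smul_assoc]
  rw [Finset.smul_sum, Finset.sum_congr rfl fun k _ => h2ψ k]
  exact (Finset.sum_congr rfl fun _ _ => Finset.sum_comm).trans Finset.sum_comm
end
end
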